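/- For integers k, j ≥ 0: if μ > −1 then w ∂/∂z̄ Q^μ_{k,j}(z,w) + (k+μ+1) Q^μ_{k,j}(z,w) = ((k+μ+1)(j+μ+1)/(μ+1)) Q^{μ+1}_{k,j}(z,w); and if μ > 0 then (1−zw) w ∂/∂z̄ Q^μ_{k,j}(z,w) − [j(1−zw) + μ] Q^μ_{k,j}(z,w) = −μ Q^{μ−1}_{k,j}(z,w). These are identities of bivariate polynomials in (z,w). -/

import Mathlib

/-! Put y = zw - 1, so that 2zw - 1 = 2y + 1 and 1 - zw = -y. Then
Q^μ_{k,j} = z^{k-j} w^{j-k} R(y) with R(y) a multiple of n! P_n^{(μ,|k-j|)}(2y + 1), n = min(k,j),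
and w ∂/∂w acts on R(zw - 1) as (y + 1) d/dy. Both identities therefore reduce to the contiguous
relations of Jacobi polynomials in the parameter α, which in the variable y are coefficientwise
identities between C(n,k) (k+α+1)_{n-k} (n+α+β+1)_k; these follow from
(x)_m (x + m) = x (x+1)_m and (x+1)_{m+1} - (x)_{m+1} = (m+1) (x+1)_m. -/

noncomputable def jacobiP (α β : ℝ) (n : ℕ) : Polynomial ℝ :=
  (n.factorial : ℝ)⁻¹ •
    ∑ k ∈ Finset.range (n + 1),
      ((n.choose k : ℝ) * ((ascPochhammer ℝ (n - k)).eval ((k : ℝ) + α + 1)) *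
          ((ascPochhammer ℝ k).eval ((n : ℝ) + α + β + 1))) •
        ((Polynomial.X - 1) * Polynomial.C (2⁻¹ : ℝ)) ^ k

noncomputable def zernikeQ (μ : ℝ) (k j : ℕ) : MvPolynomial (Fin 2) ℂ :=
  if j ≤ k then
    MvPolynomial.C ((((j.factorial : ℝ) / ((ascPochhammer ℝ j).eval (μ + 1)) : ℝ) : ℂ)) *
      MvPolynomial.X 0 ^ (k - j) *
      Polynomial.aeval (2 * MvPolynomial.X 0 * MvPolynomial.X 1 - 1)
        (jacobiP μ ((k - j : ℕ) : ℝ) j)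
  else
    MvPolynomial.C ((((k.factorial : ℝ) / ((ascPochhammer ℝ k).eval (μ + 1)) : ℝ) : ℂ)) *
      MvPolynomial.X 1 ^ (j - k) *
      Polynomial.aeval (2 * MvPolynomial.X 0 * MvPolynomial.X 1 - 1)
        (jacobiP μ ((j - k : ℕ) : ℝ) k)

open scoped Polynomial Nat

section Jacobi

open Polynomial Finset

lemma ascPochhammer_succ_eval_left {S : Type*} [CommSemiring S] (n : ℕ) (x : S) :
    (ascPochhammer S (n + 1)).eval x = x * (ascPochhammer S n).eval (x + 1) := by
  simp [ascPochhammer_succ_left, eval_comp]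

lemma ascPochhammer_eval_mul_add {S : Type*} [CommSemiring S] (n : ℕ) (x : S) :
    (ascPochhammer S n).eval x * (x + n) = x * (ascPochhammer S n).eval (x + 1) := by
  rw [← ascPochhammer_succ_eval, ascPochhammer_succ_eval_left]

lemma ascPochhammer_eval_add_one_succ {S : Type*} [CommRing S] (n : ℕ) (x : S) :
    (ascPochhammer S (n + 1)).eval (x + 1) =
      (ascPochhammer S (n + 1)).eval x + (n + 1) * (ascPochhammer S n).eval (x + 1) := by
  rw [ascPochhammer_succ_eval, ascPochhammer_succ_eval_left]
  ring

noncomputable def jacobiCoeff (α β : ℝ) (n k : ℕ) : ℝ :=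
  n.choose k * (ascPochhammer ℝ (n - k)).eval ((k : ℝ) + α + 1) *
    (ascPochhammer ℝ k).eval ((n : ℝ) + α + β + 1)

lemma jacobiCoeff_of_lt {α β : ℝ} {n k : ℕ} (h : n < k) : jacobiCoeff α β n k = 0 := by
  simp [jacobiCoeff, Nat.choose_eq_zero_of_lt h]

lemma cast_choose_succ_right_mul (k m : ℕ) :
    ((k + m + 1).choose (k + 1) : ℝ) * (k + 1) = (k + m + 1).choose k * (m + 1) := by
  have h := Nat.choose_succ_right_eq (k + m + 1) k
  rw [show k + m + 1 - k = m + 1 by omega] at h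
  exact_mod_cast h

lemma jacobiCoeff_raise (α β : ℝ) (n k : ℕ) :
    (k + (n + α + β + 1)) * jacobiCoeff α β n k + (k + 1) * jacobiCoeff α β n (k + 1) =
      (n + α + β + 1) * jacobiCoeff (α + 1) β n k := by
  rcases lt_or_ge n k with h | h
  · simp [jacobiCoeff_of_lt h, jacobiCoeff_of_lt (h.trans k.lt_succ_self)]
  have hc := ascPochhammer_eval_mul_add k ((n : ℝ) + α + β + 1)
  have hc' := ascPochhammer_succ_eval_left k ((n : ℝ) + α + β + 1)
  rcases h.eq_or_lt with rfl | h
  · simp only [jacobiCoeff, Nat.sub_self, Nat.choose_self, Nat.choose_succ_self,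
      ascPochhammer_zero, eval_one]
    rw [show (k : ℝ) + (α + 1) + β + 1 = k + α + β + 1 + 1 by ring]
    push_cast
    linear_combination hc
  obtain ⟨m, rfl⟩ : ∃ m, n = k + m + 1 := ⟨n - k - 1, by omega⟩
  have hx := ascPochhammer_eval_add_one_succ m ((k : ℝ) + α + 1)
  simp only [jacobiCoeff, show k + m + 1 - k = m + 1 by omega,
    show k + m + 1 - (k + 1) = m by omega]
  rw [show (k : ℝ) + (α + 1) + 1 = k + α + 1 + 1 by ring,
    show ((k + 1 : ℕ) : ℝ) + α + 1 = k + α + 1 + 1 by push_cast; ring,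
    show ((k + m + 1 : ℕ) : ℝ) + (α + 1) + β + 1 = (k + m + 1 : ℕ) + α + β + 1 + 1 by
      ring]
  set c : ℝ := ((k + m + 1 : ℕ) : ℝ) + α + β + 1
  set x : ℝ := (k : ℝ) + α + 1
  set C₀ : ℝ := ((k + m + 1).choose k : ℝ)
  linear_combination C₀ * (ascPochhammer ℝ (m + 1)).eval x * hc
    + (ascPochhammer ℝ m).eval (x + 1) * (ascPochhammer ℝ (k + 1)).eval c *
      cast_choose_succ_right_mul k m
    + (m + 1) * C₀ * (ascPochhammer ℝ m).eval (x + 1) * hc'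
    - C₀ * c * (ascPochhammer ℝ k).eval (c + 1) * hx

lemma jacobiCoeff_lower_zero (α β : ℝ) (n : ℕ) :
    α * jacobiCoeff α β n 0 = (α + n) * jacobiCoeff (α - 1) β n 0 := by
  have h := ascPochhammer_eval_mul_add n α
  simp only [jacobiCoeff, Nat.choose_zero_right, Nat.sub_zero, ascPochhammer_zero, eval_one]
  rw [show ((0 : ℕ) : ℝ) + α + 1 = α + 1 by simp,
    show ((0 : ℕ) : ℝ) + (α - 1) + 1 = α by simp]
  linear_combination -h

lemma jacobiCoeff_lower (α β : ℝ) (n k : ℕ) :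
    (k + 1 + α) * jacobiCoeff α β n (k + 1) - (n - k) * jacobiCoeff α β n k =
      (α + n) * jacobiCoeff (α - 1) β n (k + 1) := by
  rcases le_or_gt n k with h | h
  · rcases h.eq_or_lt with rfl | h
    · simp [jacobiCoeff_of_lt n.lt_succ_self]
    · simp [jacobiCoeff_of_lt h, jacobiCoeff_of_lt (h.trans k.lt_succ_self)]
  obtain ⟨m, rfl⟩ : ∃ m, n = k + m + 1 := ⟨n - k - 1, by omega⟩
  simp only [jacobiCoeff, show k + m + 1 - k = m + 1 by omega,
    show k + m + 1 - (k + 1) = m by omega]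
  set y : ℝ := ((k + m + 1 : ℕ) : ℝ) + α + β
  set x : ℝ := (k : ℝ) + α + 1
  have hxl := ascPochhammer_succ_eval_left m x
  have hxr := ascPochhammer_succ_eval m x
  have hy := ascPochhammer_eval_add_one_succ k y
  rw [show ((k + 1 : ℕ) : ℝ) + α + 1 = x + 1 by push_cast; ring,
    show ((k + 1 : ℕ) : ℝ) + (α - 1) + 1 = x by push_cast; ring,
    show ((k + m + 1 : ℕ) : ℝ) + α + β + 1 = y + 1 by ring,
    show ((k + m + 1 : ℕ) : ℝ) + (α - 1) + β + 1 = y by ring]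
  push_cast
  linear_combination
    -((k + m + 1).choose (k + 1) : ℝ) * (ascPochhammer ℝ (k + 1)).eval (y + 1) * hxl
    + ((k + m + 1).choose (k + 1) : ℝ) * (ascPochhammer ℝ (k + 1)).eval y * hxr
    + ((k + m + 1).choose (k + 1) : ℝ) * (ascPochhammer ℝ (m + 1)).eval x * hy
    + (ascPochhammer ℝ (m + 1)).eval x * (ascPochhammer ℝ k).eval (y + 1) *
      cast_choose_succ_right_mul k m

noncomputable def shiftedJacobi (α β : ℝ) (n : ℕ) : ℝ[X] :=
  ∑ k ∈ range (n + 1), monomial k (jacobiCoeff α β n k)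

lemma coeff_shiftedJacobi (α β : ℝ) (n k : ℕ) :
    (shiftedJacobi α β n).coeff k = jacobiCoeff α β n k := by
  simp only [shiftedJacobi, finsetSum_coeff, coeff_monomial, sum_ite_eq', mem_range]
  split_ifs with h
  · rfl
  · exact (jacobiCoeff_of_lt (by omega)).symm

lemma coeff_X_mul_derivative {R : Type*} [CommSemiring R] (p : R[X]) (k : ℕ) :
    (X * derivative p).coeff k = k * p.coeff k := by
  rcases k with _ | k
  · simp
  · rw [coeff_X_mul, coeff_derivative]
    push_cast
    ring

lemma shiftedJacobi_raise (α β : ℝ) (n : ℕ) :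
    (X + 1) * derivative (shiftedJacobi α β n) + C (n + α + β + 1) * shiftedJacobi α β n =
      C (n + α + β + 1) * shiftedJacobi (α + 1) β n := by
  ext k
  simp only [add_mul, one_mul, coeff_add, coeff_C_mul, coeff_X_mul_derivative, coeff_derivative,
    coeff_shiftedJacobi]
  linear_combination jacobiCoeff_raise α β n k

lemma shiftedJacobi_lower (α β : ℝ) (n : ℕ) :
    X * ((X + 1) * derivative (shiftedJacobi α β n)) +
        (C α - C (n : ℝ) * X) * shiftedJacobi α β n =
      C (α + n) * shiftedJacobi (α - 1) β n := by
  ext k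
  rcases k with _ | k
  · simp only [coeff_add, coeff_X_mul_zero, sub_mul, coeff_sub, coeff_C_mul, mul_assoc,
      coeff_shiftedJacobi]
    linear_combination jacobiCoeff_lower_zero α β n
  · simp only [mul_add, add_mul, sub_mul, mul_one, one_mul, coeff_add, coeff_sub, coeff_X_mul,
      coeff_C_mul, coeff_X_mul_derivative, coeff_derivative, coeff_shiftedJacobi, mul_assoc]
    linear_combination jacobiCoeff_lower α β n k

lemma jacobiP_eq_comp (α β : ℝ) (n : ℕ) :
    jacobiP α β n = C (n ! : ℝ)⁻¹ * (shiftedJacobi α β n).comp ((X - 1) * C 2⁻¹) := by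
  simp only [jacobiP, shiftedJacobi, jacobiCoeff, Polynomial.sum_comp, monomial_comp, smul_eq_C_mul,
    mul_sum]

lemma aeval_jacobiP {A : Type*} [CommRing A] [Algebra ℝ A] (α β : ℝ) (n : ℕ) (a : A) :
    aeval (2 * a - 1) (jacobiP α β n) =
      algebraMap ℝ A (n ! : ℝ)⁻¹ * aeval (a - 1) (shiftedJacobi α β n) := by
  have h : (2 * a - 1 - 1) * algebraMap ℝ A 2⁻¹ = a - 1 := by
    rw [show 2 * a - 1 - 1 = (a - 1) * algebraMap ℝ A 2 by rw [map_ofNat]; ring,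
      mul_assoc, ← map_mul]
    norm_num
  rw [jacobiP_eq_comp, map_mul, aeval_comp]
  simp [h]

end Jacobi

section Radial

open Polynomial

noncomputable def zernikeRadial (μ : ℝ) (k j : ℕ) : ℝ[X] :=
  C ((ascPochhammer ℝ (min k j)).eval (μ + 1))⁻¹ *
    shiftedJacobi μ (k - j + (j - k) : ℕ) (min k j)

lemma zernikeRadial_raise {μ : ℝ} (hμ : -1 < μ) (k j : ℕ) :
    ((j - k : ℕ) : ℝ[X]) * zernikeRadial μ k j + (X + 1) * derivative (zernikeRadial μ k j) +
        C (k + μ + 1) * zernikeRadial μ k j =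
      C ((k + μ + 1) * (j + μ + 1) / (μ + 1)) * zernikeRadial (μ + 1) k j := by
  unfold zernikeRadial
  have hk : ((min k j : ℕ) : ℝ) + (k - j : ℕ) = k := by norm_cast; omega
  have hj : ((min k j : ℕ) : ℝ) + (j - k : ℕ) = j := by norm_cast; omega
  have hab : ((k - j : ℕ) : ℝ) * (j - k : ℕ) = 0 := by
    norm_cast; exact Nat.mul_eq_zero.mpr (by omega)
  set n := min k j
  set a := k - j
  set b := j - k
  have hp := (ascPochhammer_pos n (μ + 1) (by linarith)).ne'
  have hq := (ascPochhammer_pos n (μ + 1 + 1) (by linarith)).ne'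
  have hpq := ascPochhammer_eval_mul_add n (μ + 1)
  have hμ1 : μ + 1 ≠ 0 := by linarith
  apply Polynomial.funext
  intro y
  have hS := congrArg (eval y) (shiftedJacobi_raise μ (a + b : ℕ) n)
  simp only [eval_add, eval_mul, eval_C, eval_X, eval_one, eval_natCast, derivative_C_mul]
    at hS ⊢
  rw [← hk, ← hj]
  field_simp
  push_cast at hS ⊢
  set s₁ := (shiftedJacobi (μ + 1) (a + b : ℝ) n).eval y
  linear_combination (μ + 1) * (ascPochhammer ℝ n).eval (μ + 1 + 1) * hS
    - (n + μ + (a + b) + 1) * s₁ * hpq - s₁ * (ascPochhammer ℝ n).eval (μ + 1) * hab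

lemma zernikeRadial_lower {μ : ℝ} (hμ : 0 < μ) (k j : ℕ) :
    X * (((j - k : ℕ) : ℝ[X]) * zernikeRadial μ k j +
          (X + 1) * derivative (zernikeRadial μ k j)) +
        (C μ - C (j : ℝ) * X) * zernikeRadial μ k j =
      C μ * zernikeRadial (μ - 1) k j := by
  unfold zernikeRadial
  have hj : ((min k j : ℕ) : ℝ) + (j - k : ℕ) = j := by norm_cast; omega
  set n := min k j
  set β : ℝ := ((k - j + (j - k) : ℕ) : ℝ)
  have hp := (ascPochhammer_pos n (μ + 1) (by linarith)).ne'
  have hq := (ascPochhammer_pos n μ hμ).ne'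
  have hpq := ascPochhammer_eval_mul_add n μ
  apply Polynomial.funext
  intro y
  have hS := congrArg (eval y) (shiftedJacobi_lower μ β n)
  simp only [eval_add, eval_sub, eval_mul, eval_C, eval_X, eval_one, eval_natCast,
    derivative_C_mul] at hS ⊢
  rw [← hj, sub_add_cancel]
  field_simp
  linear_combination (ascPochhammer ℝ n).eval μ * hS
    + (shiftedJacobi (μ - 1) β n).eval y * hpq

end Radial

section Zernike

open MvPolynomial

lemma pderiv_aeval {σ S R : Type*} [CommSemiring S] [CommSemiring R] [Algebra S R] (i : σ)
    (q : MvPolynomial σ R) (p : S[X]) :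
    pderiv i (Polynomial.aeval q p) = Polynomial.aeval q (Polynomial.derivative p) * pderiv i q :=
  ((pderiv i).restrictScalars S).map_aeval p q

lemma X_one_mul_pderiv_one_monomial_mul_aeval (a b : ℕ) (p : ℝ[X]) :
    X 1 * pderiv 1
        (X 0 ^ a * X 1 ^ b * Polynomial.aeval (X 0 * X 1 - 1 : MvPolynomial (Fin 2) ℂ) p) =
      X 0 ^ a * X 1 ^ b * Polynomial.aeval (X 0 * X 1 - 1)
        ((b : ℝ[X]) * p + (Polynomial.X + 1) * Polynomial.derivative p) := by
  have ha : pderiv 1 (X 0 ^ a : MvPolynomial (Fin 2) ℂ) = 0 := by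
    simp [Derivation.leibniz_pow, pderiv_X]
  have hb : X 1 * pderiv 1 (X 1 ^ b : MvPolynomial (Fin 2) ℂ) =
      (b : MvPolynomial (Fin 2) ℂ) * X 1 ^ b := by
    rcases b with _ | b
    · simp
    · rw [Derivation.leibniz_pow, Nat.add_sub_cancel]
      simp
      ring
  have hy : pderiv 1 (X 0 * X 1 - 1 : MvPolynomial (Fin 2) ℂ) = X 0 := by simp [pderiv_X]
  simp only [Derivation.leibniz, ha, pderiv_aeval, hy, smul_eq_mul, mul_zero, add_zero, map_add,
    map_mul, map_natCast, Polynomial.aeval_X, map_one]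
  linear_combination (X 0 ^ a * Polynomial.aeval (X 0 * X 1 - 1 : MvPolynomial (Fin 2) ℂ) p) * hb

lemma C_ofReal {σ : Type*} (r : ℝ) : (C (r : ℂ) : MvPolynomial σ ℂ) = algebraMap ℝ _ r :=
  rfl

lemma zernikeQ_eq (μ : ℝ) (k j : ℕ) :
    zernikeQ μ k j = X 0 ^ (k - j) * X 1 ^ (j - k) *
      Polynomial.aeval (X 0 * X 1 - 1 : MvPolynomial (Fin 2) ℂ) (zernikeRadial μ k j) := by
  have hnormalize (n : ℕ) (β : ℝ) :
      C ((n ! / (ascPochhammer ℝ n).eval (μ + 1) : ℝ) : ℂ) *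
          Polynomial.aeval (2 * X 0 * X 1 - 1 : MvPolynomial (Fin 2) ℂ) (jacobiP μ β n) =
        Polynomial.aeval (X 0 * X 1 - 1 : MvPolynomial (Fin 2) ℂ)
          (Polynomial.C ((ascPochhammer ℝ n).eval (μ + 1))⁻¹ * shiftedJacobi μ β n) := by
    rw [mul_assoc, aeval_jacobiP, C_ofReal, map_mul, Polynomial.aeval_C, ← mul_assoc, ← map_mul]
    congr 2
    field_simp
  unfold zernikeQ zernikeRadial
  split_ifs with h
  · rw [min_eq_right h, Nat.sub_eq_zero_of_le h, pow_zero, mul_one, add_zero, mul_right_comm,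
      hnormalize, mul_comm]
  · rw [min_eq_left (by omega), Nat.sub_eq_zero_of_le (by omega : k ≤ j), pow_zero, one_mul,
      zero_add, mul_right_comm, hnormalize, mul_comm]

end Zernike

open MvPolynomial in
theorem zernike_ladder_Z4 (μ : ℝ) (k j : ℕ) :
    (μ > -1 →
      X 1 * pderiv (1 : Fin 2) (zernikeQ μ k j) +
          C ((((k : ℝ) + μ + 1 : ℝ)) : ℂ) * zernikeQ μ k j =
        C (((((k : ℝ) + μ + 1) * ((j : ℝ) + μ + 1) / (μ + 1) : ℝ)) : ℂ) *
          zernikeQ (μ + 1) k j) ∧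
    (μ > 0 →
      (1 - X 0 * X 1) * (X 1 * pderiv (1 : Fin 2) (zernikeQ μ k j)) -
          (C (((j : ℝ)) : ℂ) * (1 - X 0 * X 1) + C ((μ : ℂ))) * zernikeQ μ k j =
        -(C ((μ : ℂ)) * zernikeQ (μ - 1) k j)) := by
  refine ⟨fun hμ => ?_, fun hμ => ?_⟩
  · have h := congrArg (Polynomial.aeval (X 0 * X 1 - 1 : MvPolynomial (Fin 2) ℂ))
      (zernikeRadial_raise hμ k j)
    rw [zernikeQ_eq, zernikeQ_eq, X_one_mul_pderiv_one_monomial_mul_aeval, C_ofReal, C_ofReal]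
    simp only [map_add, map_mul, map_natCast, Polynomial.aeval_C, Polynomial.aeval_X, map_one]
      at h ⊢
    linear_combination X 0 ^ (k - j) * X 1 ^ (j - k) * h
  · have h := congrArg (Polynomial.aeval (X 0 * X 1 - 1 : MvPolynomial (Fin 2) ℂ))
      (zernikeRadial_lower hμ k j)
    rw [zernikeQ_eq, zernikeQ_eq, X_one_mul_pderiv_one_monomial_mul_aeval, C_ofReal, C_ofReal]
    simp only [map_add, map_sub, map_mul, map_natCast, Polynomial.aeval_C, Polynomial.aeval_X,
      map_one] at h ⊢
    linear_combination -(X 0 ^ (k - j) * X 1 ^ (j - k)) * h
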